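/- arXiv:2203.00264 — 2 statements merged into one kernel-verified Lean document; each statement's English description precedes it below -/
import Mathlib

section
/- For α > 0 and y > 0, the double sum Σ_{(n,m)∈ℤ²} n² e^{−πα(yn² + (m+n/2)²/y)} equals J₁ + J₂ where J₁ = 8Σ_{n=1}^∞ n² e^{−4παyn²} · (1 + 2Σ_{m=1}^∞ e^{−παm²/y}) and J₂ = 4Σ_{n=1}^∞ (2n−1)² e^{−παy(2n−1)²} · Σ_{m=1}^∞ e^{−πα(2m−1)²/(4y)}. Consequently it is bounded above by 4e^{−πα(y+1/(4y))}·(1 + ε_a) where ε_a = ε_{a,1} + ε_{a,2} + ε_{a,1}ε_{a,2} + ε_{a,4} with ε_{a,1} = Σ_{n=2}^∞ (2n−1)² e^{−παy((2n−1)²−1)}, ε_{a,2} = Σ_{n=2}^∞ e^{−(πα/(4y))((2n−1)²−1)}, and ε_{a,4} = 2e^{−πα(3y−1/(4y))}(1 + Σ_{n=2}^∞ n² e^{−4παy(n²−1)})·ϑ₃(α/y). -/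
open Real

/-- `ϑ₃(X) = 1 + 2Σ_{k=1}^∞ e^{−πk²X}`. -/
noncomputable def theta3 (X : ℝ) : ℝ :=
  1 + 2 * ∑' k : ℕ, Real.exp (-π * ((k : ℝ) + 1) ^ 2 * X)

/-- `ε_{a,1} = Σ_{n=2}^∞ (2n−1)² e^{−παy((2n−1)²−1)}`. -/
noncomputable def epsA1 (α y : ℝ) : ℝ :=
  ∑' n : ℕ, (2 * (n : ℝ) + 3) ^ 2 * Real.exp (-π * α * y * ((2 * (n : ℝ) + 3) ^ 2 - 1))

/-- `ε_{a,2} = Σ_{n=2}^∞ e^{−(πα/(4y))((2n−1)²−1)}`. -/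
noncomputable def epsA2 (α y : ℝ) : ℝ :=
  ∑' n : ℕ, Real.exp (-(π * α / (4 * y)) * ((2 * (n : ℝ) + 3) ^ 2 - 1))

/-- `ε_{a,4} = 2e^{−πα(3y−1/(4y))}(1 + Σ_{n=2}^∞ n² e^{−4παy(n²−1)})·ϑ₃(α/y)`. -/
noncomputable def epsA4 (α y : ℝ) : ℝ :=
  2 * Real.exp (-π * α * (3 * y - 1 / (4 * y))) *
    (1 + ∑' n : ℕ, ((n : ℝ) + 2) ^ 2 * Real.exp (-4 * π * α * y * (((n : ℝ) + 2) ^ 2 - 1))) *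
    theta3 (α / y)

/-- `ε_a = ε_{a,1} + ε_{a,2} + ε_{a,1}ε_{a,2} + ε_{a,4}`. -/
noncomputable def epsA (α y : ℝ) : ℝ :=
  epsA1 α y + epsA2 α y + epsA1 α y * epsA2 α y + epsA4 α y

/-!
Put `q = 2m + n`: the exponent becomes `πα(y n² + q²/(4y))`, and `(n, m) ↦ (n, q)` is a bijection
of `ℤ²` onto the pairs of equal parity. Splitting into `n, q` both even and both odd factors the
double sum into products of one-variable Gaussian sums, which are `J₁` and `J₂`. Pulling the leading
terms `e^{-παy}`, `e^{-πα/(4y)}`, `e^{-4παy}` out of these series turns `J₁ + J₂` into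
`4e^{-πα(y+1/(4y))}(1 + ε_a)` exactly, so the bound holds with equality.
-/

lemma summable_pow_mul_exp_mul_sq (k : ℕ) {c : ℝ} (hc : c < 0) :
    Summable fun n : ℤ => (n : ℝ) ^ k * exp (c * n ^ 2) := by
  refine Summable.of_norm ((summable_pow_mul_jacobiTheta₂_term_bound 0
    (div_pos (neg_pos.mpr hc) pi_pos) k).congr fun n => ?_)
  rw [norm_mul, norm_pow, norm_of_nonneg (exp_pos _).le, Real.norm_eq_abs, Int.cast_abs]
  congr 2
  field_simp
  ring

section
variable {M : Type*} [AddCommGroup M] [TopologicalSpace M] [IsTopologicalAddGroup M]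
  {g : ℤ → M} {s : M}

lemma HasSum.int_two_mul_of_even (hg : g.Even) (h : HasSum (fun n : ℕ => g (2 * (n + 1))) s) :
    HasSum (fun n : ℤ => g (2 * n)) (g 0 + 2 • s) := by
  have hnat : HasSum (fun n : ℕ => g (2 * n)) (g 0 + s) := by
    refine (hasSum_nat_add_iff' 1).mp ?_
    rw [Finset.sum_range_one, Nat.cast_zero, mul_zero, add_sub_cancel_left]
    exact_mod_cast h
  have hneg : HasSum (fun n : ℕ => g (2 * -(n + 1))) s := h.congr_fun fun n => by rw [mul_neg, hg]
  rw [two_nsmul, ← add_assoc]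
  exact hnat.of_nat_of_neg_add_one hneg

lemma HasSum.int_two_mul_add_one_of_even (hg : g.Even) (h : HasSum (fun n : ℕ => g (2 * n + 1)) s) :
    HasSum (fun n : ℤ => g (2 * n + 1)) (2 • s) := by
  have hneg : HasSum (fun n : ℕ => g (2 * -(n + 1) + 1)) s :=
    h.congr_fun fun n => by rw [← hg]; ring_nf
  rw [two_nsmul]
  exact h.of_nat_of_neg_add_one hneg

end

lemma HasSum.mul_of_nonneg {ι κ : Type*} {f : ι → ℝ} {g : κ → ℝ} {s t : ℝ}
    (hf : HasSum f s) (hg : HasSum g t) (hf₀ : 0 ≤ f) (hg₀ : 0 ≤ g) :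
    HasSum (fun x : ι × κ => f x.1 * g x.2) (s * t) :=
  hf.mul hg (hf.summable.mul_of_nonneg hg.summable hf₀ hg₀)

/-- Composed with `(n, m) ↦ (n, 2m + n)`, the two halves become the pairs `(2a, 2b)` and
`(2a + 1, 2b + 1)`. -/
def evenOddShear : (ℤ × ℤ) ⊕ (ℤ × ℤ) ≃ ℤ × ℤ where
  toFun := Sum.elim (fun p => (2 * p.1, p.2 - p.1)) (fun p => (2 * p.1 + 1, p.2 - p.1))
  invFun p := if p.1 % 2 = 0 then .inl (p.1 / 2, p.2 + p.1 / 2) else .inr (p.1 / 2, p.2 + p.1 / 2)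
  left_inv := by
    rintro (⟨a, b⟩ | ⟨a, b⟩)
    · have h : 2 * a % 2 = 0 := by omega
      simp only [Sum.elim_inl, h, if_true, Sum.inl.injEq, Prod.mk.injEq]
      omega
    · have h : ¬(2 * a + 1) % 2 = 0 := by omega
      simp only [Sum.elim_inr, h, if_false, Sum.inr.injEq, Prod.mk.injEq]
      omega
  right_inv := by
    rintro ⟨n, m⟩
    dsimp only
    split_ifs <;> simp only [Sum.elim_inl, Sum.elim_inr, Prod.mk.injEq] <;> omega

lemma hasSum_mul_two_mul_add {u w : ℤ → ℝ} (hu : 0 ≤ u) (hw : 0 ≤ w) {A B C D : ℝ}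
    (hA : HasSum (fun n => u (2 * n)) A) (hB : HasSum (fun n => w (2 * n)) B)
    (hC : HasSum (fun n => u (2 * n + 1)) C) (hD : HasSum (fun n => w (2 * n + 1)) D) :
    HasSum (fun p : ℤ × ℤ => u p.1 * w (2 * p.2 + p.1)) (A * B + C * D) := by
  rw [← evenOddShear.hasSum_iff]
  refine HasSum.sum ?_ ?_
  · convert hA.mul_of_nonneg hB (fun n => hu (2 * n)) (fun n => hw (2 * n)) using 2 with p
    simp only [Function.comp_apply, evenOddShear, Equiv.coe_fn_mk, Sum.elim_inl]
    congr 2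
    ring
  · convert hC.mul_of_nonneg hD (fun n => hu (2 * n + 1)) (fun n => hw (2 * n + 1)) using 2 with p
    simp only [Function.comp_apply, evenOddShear, Equiv.coe_fn_mk, Sum.elim_inr]
    congr 2
    ring

lemma hasSum_mul_two_mul_add_of_even {u w : ℤ → ℝ} (hu₀ : 0 ≤ u) (hw₀ : 0 ≤ w)
    (hue : u.Even) (hwe : w.Even) (hu : Summable u) (hw : Summable w) :
    HasSum (fun p : ℤ × ℤ => u p.1 * w (2 * p.2 + p.1))
      ((u 0 + 2 * ∑' n : ℕ, u (2 * (n + 1))) * (w 0 + 2 * ∑' n : ℕ, w (2 * (n + 1)))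
        + 4 * (∑' n : ℕ, u (2 * n + 1)) * ∑' n : ℕ, w (2 * n + 1)) := by
  have even_inj : Function.Injective fun n : ℕ => 2 * ((n : ℤ) + 1) := fun a b h => by
    simp only at h; omega
  have odd_inj : Function.Injective fun n : ℕ => 2 * (n : ℤ) + 1 := fun a b h => by
    simp only at h; omega
  have key := hasSum_mul_two_mul_add hu₀ hw₀
    (((hu.comp_injective even_inj).hasSum).int_two_mul_of_even hue)
    (((hw.comp_injective even_inj).hasSum).int_two_mul_of_even hwe)
    (((hu.comp_injective odd_inj).hasSum).int_two_mul_add_one_of_even hue)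
    (((hw.comp_injective odd_inj).hasSum).int_two_mul_add_one_of_even hwe)
  convert key using 1
  simp only [nsmul_eq_mul, Function.comp_def, Nat.cast_ofNat]
  ring

lemma sq_mul_exp_double_sum_term_eq (α y : ℝ) (p : ℤ × ℤ) :
    (p.1 : ℝ) ^ 2 * exp (-π * α * (y * (p.1 : ℝ) ^ 2 + ((p.2 : ℝ) + (p.1 : ℝ) / 2) ^ 2 / y))
      = (p.1 : ℝ) ^ 2 * exp (-(π * α * y) * (p.1 : ℝ) ^ 2)
        * exp (-(π * α / (4 * y)) * ((2 * p.2 + p.1 : ℤ) : ℝ) ^ 2) := by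
  conv_rhs => rw [mul_assoc, ← exp_add]
  push_cast
  ring_nf

lemma hasSum_sq_mul_exp_double_sum {α y : ℝ} (hα : 0 < α) (hy : 0 < y) :
    HasSum (fun p : ℤ × ℤ => (p.1 : ℝ) ^ 2 *
          Real.exp (-π * α * (y * (p.1 : ℝ) ^ 2 + ((p.2 : ℝ) + (p.1 : ℝ) / 2) ^ 2 / y)))
      (8 * (∑' n : ℕ, ((n : ℝ) + 1) ^ 2 * Real.exp (-4 * π * α * y * ((n : ℝ) + 1) ^ 2)) *
            (1 + 2 * ∑' m : ℕ, Real.exp (-π * α * ((m : ℝ) + 1) ^ 2 / y))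
        + 4 * (∑' n : ℕ, (2 * (n : ℝ) + 1) ^ 2 * Real.exp (-π * α * y * (2 * (n : ℝ) + 1) ^ 2)) *
            (∑' m : ℕ, Real.exp (-π * α * (2 * (m : ℝ) + 1) ^ 2 / (4 * y)))) := by
  set u : ℤ → ℝ := fun n => (n : ℝ) ^ 2 * exp (-(π * α * y) * n ^ 2)
  set w : ℤ → ℝ := fun n => exp (-(π * α / (4 * y)) * n ^ 2)
  have key := hasSum_mul_two_mul_add_of_even (u := u) (w := w) (fun n => by positivity)
    (fun n => (exp_pos _).le) (fun n => by simp [u]) (fun n => by simp [w])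
    (summable_pow_mul_exp_mul_sq 2 (neg_lt_zero.mpr (by positivity)))
    (by simpa [w] using summable_pow_mul_exp_mul_sq 0 (neg_lt_zero.mpr (by positivity)))
  have hA : ∑' n : ℕ, u (2 * (n + 1))
      = 4 * ∑' n : ℕ, ((n : ℝ) + 1) ^ 2 * Real.exp (-4 * π * α * y * ((n : ℝ) + 1) ^ 2) := by
    rw [← tsum_mul_left]
    congr 1 with n
    simp only [u]
    push_cast
    ring_nf
  have hB : ∑' n : ℕ, w (2 * (n + 1)) = ∑' m : ℕ, Real.exp (-π * α * ((m : ℝ) + 1) ^ 2 / y) := by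
    congr 1 with n
    simp only [w]
    push_cast
    ring_nf
  have hC : ∑' n : ℕ, u (2 * n + 1)
      = ∑' n : ℕ, (2 * (n : ℝ) + 1) ^ 2 * Real.exp (-π * α * y * (2 * (n : ℝ) + 1) ^ 2) := by
    congr 1 with n
    simp only [u]
    push_cast
    ring_nf
  have hD : ∑' n : ℕ, w (2 * n + 1)
      = ∑' m : ℕ, Real.exp (-π * α * (2 * (m : ℝ) + 1) ^ 2 / (4 * y)) := by
    congr 1 with n
    simp only [w]
    push_cast
    ring_nf
  convert key using 1
  · ext p
    exact sq_mul_exp_double_sum_term_eq α y p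
  · have hu0 : u 0 = 0 := by simp [u]
    have hw0 : w 0 = 1 := by simp [w]
    rw [hu0, hw0, hA, hB, hC, hD]
    ring

lemma tsum_mul_exp_eq_exp_mul_one_add {w x : ℕ → ℝ} {c : ℝ} (hw : w 0 = 1) (hx : x 0 = 1)
    (h : Summable fun n => w n * exp (c * x n)) :
    ∑' n, w n * exp (c * x n) = exp c * (1 + ∑' n, w (n + 1) * exp (c * (x (n + 1) - 1))) := by
  rw [h.tsum_eq_zero_add, hw, hx, mul_one, one_mul, mul_one_add, ← tsum_mul_left]
  refine congrArg _ (tsum_congr fun n => ?_)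
  rw [mul_left_comm, ← exp_add]
  ring_nf

lemma tsum_odd_pow_mul_exp_eq (k : ℕ) {c : ℝ} (hc : c < 0) :
    ∑' n : ℕ, (2 * (n : ℝ) + 1) ^ k * exp (c * (2 * n + 1) ^ 2)
      = exp c * (1 + ∑' n : ℕ, (2 * (n : ℝ) + 3) ^ k * exp (c * ((2 * n + 3) ^ 2 - 1))) := by
  have hinj : Function.Injective fun n : ℕ => 2 * (n : ℤ) + 1 := fun a b h => by
    simp only at h; omega
  have hs := ((summable_pow_mul_exp_mul_sq k hc).comp_injective hinj).congr fun n => by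
    simp only [Function.comp_apply]; push_cast; rfl
  rw [tsum_mul_exp_eq_exp_mul_one_add (w := fun n : ℕ => (2 * (n : ℝ) + 1) ^ k)
    (x := fun n : ℕ => (2 * (n : ℝ) + 1) ^ 2) (by simp) (by simp) hs]
  congr 3 with n
  push_cast
  ring_nf

lemma tsum_succ_pow_mul_exp_eq (k : ℕ) {c : ℝ} (hc : c < 0) :
    ∑' n : ℕ, ((n : ℝ) + 1) ^ k * exp (c * (n + 1) ^ 2)
      = exp c * (1 + ∑' n : ℕ, ((n : ℝ) + 2) ^ k * exp (c * ((n + 2) ^ 2 - 1))) := by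
  have hinj : Function.Injective fun n : ℕ => (n : ℤ) + 1 := fun a b h => by
    simp only at h; omega
  have hs := ((summable_pow_mul_exp_mul_sq k hc).comp_injective hinj).congr fun n => by
    simp only [Function.comp_apply]; push_cast; rfl
  rw [tsum_mul_exp_eq_exp_mul_one_add (w := fun n : ℕ => ((n : ℝ) + 1) ^ k)
    (x := fun n : ℕ => ((n : ℝ) + 1) ^ 2) (by simp) (by simp) hs]
  congr 3 with n
  push_cast
  ring_nf

lemma split_sum_eq_exp_mul_one_add_epsA {α y : ℝ} (hα : 0 < α) (hy : 0 < y) :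
    8 * (∑' n : ℕ, ((n : ℝ) + 1) ^ 2 * Real.exp (-4 * π * α * y * ((n : ℝ) + 1) ^ 2)) *
        (1 + 2 * ∑' m : ℕ, Real.exp (-π * α * ((m : ℝ) + 1) ^ 2 / y))
      + 4 * (∑' n : ℕ, (2 * (n : ℝ) + 1) ^ 2 * Real.exp (-π * α * y * (2 * (n : ℝ) + 1) ^ 2)) *
        (∑' m : ℕ, Real.exp (-π * α * (2 * (m : ℝ) + 1) ^ 2 / (4 * y)))
      = 4 * Real.exp (-π * α * (y + 1 / (4 * y))) * (1 + epsA α y) := by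
  have hc : 0 < π * α * y := by positivity
  have hd : 0 < π * α / (4 * y) := by positivity
  have hS4 : ∑' m : ℕ, Real.exp (-π * α * (2 * (m : ℝ) + 1) ^ 2 / (4 * y))
      = exp (-(π * α / (4 * y))) * (1 + epsA2 α y) := by
    simpa [epsA2, ← mul_div_right_comm, neg_div, neg_mul] using
      tsum_odd_pow_mul_exp_eq 0 (c := -(π * α / (4 * y))) (by linarith)
  have htheta : 1 + 2 * ∑' m : ℕ, Real.exp (-π * α * ((m : ℝ) + 1) ^ 2 / y) = theta3 (α / y) := by
    rw [theta3]
    congr 3 with m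
    congr 1
    ring
  have hexp4 : exp (-4 * π * α * y)
      = exp (-π * α * (y + 1 / (4 * y))) * exp (-π * α * (3 * y - 1 / (4 * y))) := by
    rw [← exp_add]
    ring_nf
  have hexp1 : exp (-π * α * (y + 1 / (4 * y))) = exp (-π * α * y) * exp (-(π * α / (4 * y))) := by
    rw [← exp_add]
    ring_nf
  rw [tsum_succ_pow_mul_exp_eq 2 (by linarith), tsum_odd_pow_mul_exp_eq 2 (by linarith), hS4,
    htheta, epsA, epsA4, ← epsA1, hexp4, hexp1]
  ring

theorem double_sum_n_sq_split_and_upper_bound (α y : ℝ) (hα : 0 < α) (hy : 0 < y) :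
    (∑' p : ℤ × ℤ,
        (p.1 : ℝ) ^ 2 *
          Real.exp (-π * α * (y * (p.1 : ℝ) ^ 2 + ((p.2 : ℝ) + (p.1 : ℝ) / 2) ^ 2 / y))
      = 8 * (∑' n : ℕ, ((n : ℝ) + 1) ^ 2 * Real.exp (-4 * π * α * y * ((n : ℝ) + 1) ^ 2)) *
            (1 + 2 * ∑' m : ℕ, Real.exp (-π * α * ((m : ℝ) + 1) ^ 2 / y))
        + 4 * (∑' n : ℕ, (2 * (n : ℝ) + 1) ^ 2 * Real.exp (-π * α * y * (2 * (n : ℝ) + 1) ^ 2)) *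
            (∑' m : ℕ, Real.exp (-π * α * (2 * (m : ℝ) + 1) ^ 2 / (4 * y)))) ∧
    ∑' p : ℤ × ℤ,
        (p.1 : ℝ) ^ 2 *
          Real.exp (-π * α * (y * (p.1 : ℝ) ^ 2 + ((p.2 : ℝ) + (p.1 : ℝ) / 2) ^ 2 / y))
      ≤ 4 * Real.exp (-π * α * (y + 1 / (4 * y))) * (1 + epsA α y) := by
  have hsum := hasSum_sq_mul_exp_double_sum hα hy
  exact ⟨hsum.tsum_eq, (hsum.tsum_eq.trans (split_sum_eq_exp_mul_one_add_epsA hα hy)).le⟩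
end

section
/- Assume α ≥ 1, y ≥ √3/2 and α/y ≥ 1/3. Then ε_a < 0.15 and ε_b < 0.006, where ε_a = Σ_{n=2}^∞(2n−1)²e^{−παy((2n−1)²−1)} + Σ_{n=2}^∞ e^{−(πα/(4y))((2n−1)²−1)} + (Σ_{n=2}^∞(2n−1)²e^{−παy((2n−1)²−1)})·(Σ_{n=2}^∞ e^{−(πα/(4y))((2n−1)²−1)}) + 2e^{−πα(3y−1/(4y))}(1+Σ_{n=2}^∞ n²e^{−4παy(n²−1)})·ϑ₃(α/y), and ε_b is the sum of the four explicit exponentially small series ε_{b,1}, ε_{b,2}, ε_{b,3}, ε_{b,4} given by: ε_{b,1} = 2y⁴e^{−2παy}(1+Σ_{n=2}^∞ e^{−(2πα/y)((2n−1)²−1)})(1+Σ_{n=2}^∞(2n−1)⁴e^{−2παy((2n−1)²−1)}), ε_{b,2} = (1/8)e^{−2παy}(1+Σ_{n=2}^∞(2n−1)⁴e^{−(2πα/y)((2n−1)²−1)})(1+Σ_{n=2}^∞ e^{−2παy((2n−1)²−1)}), ε_{b,3} = 16y⁴e^{−πα(8y−2/y)}(1+Σ_{n=2}^∞ n⁴e^{−8παy(n²−1)})(1+2Σ_{n=1}^∞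 e^{−2πn²α/y}), ε_{b,4} = y⁴e^{−πα(8y−2/y)}(1+Σ_{n=2}^∞ e^{−8παy(n²−1)})(1+2Σ_{n=1}^∞ (n⁴/y⁴)e^{−2πn²α/y}). -/
/-!
Every series is dominated termwise by a geometric series: a polynomial weight `m ^ k` is
absorbed through `u ≤ exp (u - 1)`, and the quadratic exponents are bounded below by linear
ones. Since `παy ≥ π√3/2` and `πα/y ≥ π/3`, everything reduces to upper bounds for `exp (-x)`
at `x = π/3, 2π/3, π, π√3, 7, 14`, which follow from `e > 2.7182818283` and
`(1 + f/8)^8 ≤ exp f`. The weight `y⁴` in front of `exp (-2παy)` is absorbed in the same way,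
`y⁴ ≤ (9/16) exp (4 (2y/√3 - 1))`, so the worst case is `y = √3/2`. There `ε_b ≈ 0.0055`,
while `ε_a ≈ 0.13` is dominated by the first term `exp (-2πα/y) ≤ exp (-2π/3)` of `ε_{a,2}`.
-/

open Real

/-- `ε_{b,1}`. -/
noncomputable def epsB1 (α y : ℝ) : ℝ :=
  2 * y ^ 4 * Real.exp (-2 * π * α * y) *
    (1 + ∑' n : ℕ, Real.exp (-(2 * π * α / y) * ((2 * (n : ℝ) + 3) ^ 2 - 1))) *
    (1 + ∑' n : ℕ, (2 * (n : ℝ) + 3) ^ 4 * Real.exp (-2 * π * α * y * ((2 * (n : ℝ) + 3) ^ 2 - 1)))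

/-- `ε_{b,2}`. -/
noncomputable def epsB2 (α y : ℝ) : ℝ :=
  1 / 8 * Real.exp (-2 * π * α * y) *
    (1 + ∑' n : ℕ, (2 * (n : ℝ) + 3) ^ 4 * Real.exp (-(2 * π * α / y) * ((2 * (n : ℝ) + 3) ^ 2 - 1))) *
    (1 + ∑' n : ℕ, Real.exp (-2 * π * α * y * ((2 * (n : ℝ) + 3) ^ 2 - 1)))

/-- `ε_{b,3}`. -/
noncomputable def epsB3 (α y : ℝ) : ℝ :=
  16 * y ^ 4 * Real.exp (-π * α * (8 * y - 2 / y)) *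
    (1 + ∑' n : ℕ, ((n : ℝ) + 2) ^ 4 * Real.exp (-8 * π * α * y * (((n : ℝ) + 2) ^ 2 - 1))) *
    (1 + 2 * ∑' n : ℕ, Real.exp (-2 * π * ((n : ℝ) + 1) ^ 2 * α / y))

/-- `ε_{b,4}`. -/
noncomputable def epsB4 (α y : ℝ) : ℝ :=
  y ^ 4 * Real.exp (-π * α * (8 * y - 2 / y)) *
    (1 + ∑' n : ℕ, Real.exp (-8 * π * α * y * (((n : ℝ) + 2) ^ 2 - 1))) *
    (1 + 2 * ∑' n : ℕ, ((n : ℝ) + 1) ^ 4 / y ^ 4 * Real.exp (-2 * π * ((n : ℝ) + 1) ^ 2 * α / y))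

/-- `ε_b = ε_{b,1} + ε_{b,2} + ε_{b,3} + ε_{b,4}`. -/
noncomputable def epsB (α y : ℝ) : ℝ :=
  epsB1 α y + epsB2 α y + epsB3 α y + epsB4 α y

theorem pow_le_pow_mul_exp {s y : ℝ} (k : ℕ) (hs : 0 < s) (hy : 0 ≤ y) :
    y ^ k ≤ s ^ k * exp (k * (y / s - 1)) := by
  have h : y / s ≤ exp (y / s - 1) := by linarith [add_one_le_exp (y / s - 1)]
  calc y ^ k = s ^ k * (y / s) ^ k := by rw [← mul_pow, mul_div_cancel₀ y hs.ne']
    _ ≤ s ^ k * exp (y / s - 1) ^ k := by gcongr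
    _ = s ^ k * exp (k * (y / s - 1)) := by rw [exp_nat_mul]

theorem pow_mul_exp_neg_le {s y x x₀ : ℝ} (k : ℕ) (hs : 0 < s) (hy : 0 ≤ y)
    (hx : x₀ + k * (y / s - 1) ≤ x) : y ^ k * exp (-x) ≤ s ^ k * exp (-x₀) :=
  calc y ^ k * exp (-x) ≤ s ^ k * exp (k * (y / s - 1)) * exp (-x) := by
        gcongr; exact pow_le_pow_mul_exp k hs hy
    _ = s ^ k * exp (-(x - k * (y / s - 1))) := by rw [mul_assoc, ← exp_add]; ring_nf
    _ ≤ s ^ k * exp (-x₀) := by gcongr; linarith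

theorem exp_neg_le_of_add_le {m : ℕ} {f x b : ℝ} (hf : 0 ≤ f) (hx : m + f ≤ x)
    (hb : 1 ≤ b * (2.7182818283 ^ m * (1 + f / 8) ^ 8)) : exp (-x) ≤ b := by
  have hm : (2.7182818283 : ℝ) ^ m ≤ exp m := by
    rw [← exp_one_pow]; gcongr; exact exp_one_gt_d9.le
  have hf₈ : (1 + f / 8) ^ 8 ≤ exp f :=
    calc (1 + f / 8) ^ 8 ≤ exp (f / 8) ^ 8 := by gcongr; linarith [add_one_le_exp (f / 8)]
      _ = exp f := by rw [← exp_nat_mul]; ring_nf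
  have hb₀ : 0 ≤ b := (pos_of_mul_pos_left (one_pos.trans_le hb) (by positivity)).le
  rw [exp_neg, inv_le_iff_one_le_mul₀ (exp_pos x)]
  calc 1 ≤ b * (2.7182818283 ^ m * (1 + f / 8) ^ 8) := hb
    _ ≤ b * (exp m * exp f) := by gcongr
    _ ≤ b * exp x := by rw [← exp_add]; gcongr

theorem sqrt_three_gt : 1.732 < √3 := by
  rw [lt_sqrt (by norm_num)]; norm_num

theorem sqrt_three_div_two_pow_four : (√3 / 2) ^ 4 = 9 / 16 := by
  rw [div_pow, show (4 : ℕ) = 2 * 2 from rfl, pow_mul, sq_sqrt (by norm_num)]; norm_num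

theorem sqrt_three_div_two_le_mul {α y : ℝ} (hα : 1 ≤ α) (hy : √3 / 2 ≤ y) :
    √3 / 2 ≤ α * y := by
  nlinarith [(by positivity : (0 : ℝ) ≤ √3 / 2)]

theorem pi_mul_le_pi_mul_mul {α t : ℝ} (hα : 1 ≤ α) (ht : 0 ≤ t) :
    π * t ≤ π * α * t := by
  rw [mul_assoc π α]
  exact mul_le_mul_of_nonneg_left (le_mul_of_one_le_left ht hα) pi_pos.le

theorem exp_neg_le_of_one_le {x : ℝ} (hx : 1 ≤ x) : exp (-x) ≤ 1 / 2 :=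
  (exp_le_exp.2 (neg_le_neg hx)).trans exp_neg_one_lt_half.le

theorem exp_neg_le_of_seven_le {x : ℝ} (hx : 7 ≤ x) : exp (-x) ≤ 0.00092 :=
  exp_neg_le_of_add_le (m := 7) le_rfl (by simpa using hx) (by norm_num)

theorem exp_neg_le_of_fourteen_le {x : ℝ} (hx : 14 ≤ x) : exp (-x) ≤ 1e-6 :=
  exp_neg_le_of_add_le (m := 14) le_rfl (by simpa using hx) (by norm_num)

theorem exp_neg_le_of_pi_div_three_le {x : ℝ} (hx : π / 3 ≤ x) : exp (-x) ≤ 0.3511 :=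
  exp_neg_le_of_add_le (m := 1) (f := 0.047197) (by norm_num)
    (by norm_num; linarith [pi_gt_d6]) (by norm_num)

theorem exp_neg_le_of_two_pi_div_three_le {x : ℝ} (hx : 2 * π / 3 ≤ x) : exp (-x) ≤ 0.1233 :=
  exp_neg_le_of_add_le (m := 2) (f := 0.094394) (by norm_num)
    (by norm_num; linarith [pi_gt_d6]) (by norm_num)

theorem exp_neg_le_of_pi_le {x : ℝ} (hx : π ≤ x) : exp (-x) ≤ 0.0433 :=
  exp_neg_le_of_add_le (m := 3) (f := 0.141592) (by norm_num)
    (by norm_num; linarith [pi_gt_d6]) (by norm_num)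

theorem exp_neg_le_of_pi_mul_sqrt_three_le {x : ℝ} (hx : π * √3 ≤ x) :
    exp (-x) ≤ 0.0044 := by
  have hπ3 : 3.141592 * 1.732 ≤ π * √3 :=
    mul_le_mul pi_gt_d6.le sqrt_three_gt.le (by norm_num) pi_pos.le
  exact exp_neg_le_of_add_le (m := 5) (f := 0.44) (by norm_num)
    (by norm_num; linarith) (by norm_num)

theorem tsum_mul_exp_neg_le {p E : ℕ → ℝ} {C s e₀ e₁ a r : ℝ} (hp₀ : ∀ n, 0 ≤ p n)
    (hp : ∀ n : ℕ, p n ≤ C * exp (s * n)) (hE : ∀ n : ℕ, e₀ + e₁ * n ≤ E n)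
    (ha : exp (-e₀) ≤ a) (hr : exp (-(e₁ - s)) ≤ r) (hr₁ : r < 1) :
    ∑' n, p n * exp (-E n) ≤ C * a / (1 - r) := by
  have hC : 0 ≤ C := by simpa using (hp₀ 0).trans (hp 0)
  have ha₀ : 0 ≤ a := (exp_pos _).le.trans ha
  have hr₀ : 0 ≤ r := (exp_pos _).le.trans hr
  have hterm : ∀ n : ℕ, p n * exp (-E n) ≤ C * a * r ^ n := fun n =>
    calc p n * exp (-E n) ≤ C * exp (s * n) * exp (-(e₀ + e₁ * n)) := by
          gcongr; exacts [hp n, hE n]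
      _ = C * exp (-e₀) * exp (-(e₁ - s)) ^ n := by
          rw [← exp_nat_mul, mul_assoc, mul_assoc, ← exp_add, ← exp_add]; ring_nf
      _ ≤ C * a * r ^ n := by gcongr
  have hgeom : HasSum (fun n : ℕ => C * a * r ^ n) (C * a / (1 - r)) := by
    simpa [div_eq_mul_inv] using (hasSum_geometric_of_lt_one hr₀ hr₁).mul_left (C * a)
  have hsum : Summable fun n => p n * exp (-E n) :=
    .of_nonneg_of_le (fun n => mul_nonneg (hp₀ n) (exp_pos _).le) hterm hgeom.summable
  exact hasSum_le hterm hsum.hasSum hgeom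

noncomputable def oddGaussTail (k : ℕ) (c : ℝ) : ℝ :=
  ∑' n : ℕ, (2 * (n : ℝ) + 3) ^ k * exp (-(c * ((2 * (n : ℝ) + 3) ^ 2 - 1)))

noncomputable def gaussTailTwo (k : ℕ) (c : ℝ) : ℝ :=
  ∑' n : ℕ, ((n : ℝ) + 2) ^ k * exp (-(c * (((n : ℝ) + 2) ^ 2 - 1)))

noncomputable def gaussTailOne (k : ℕ) (c : ℝ) : ℝ :=
  ∑' n : ℕ, ((n : ℝ) + 1) ^ k * exp (-(c * ((n : ℝ) + 1) ^ 2))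

theorem oddGaussTail_nonneg (k : ℕ) (c : ℝ) : 0 ≤ oddGaussTail k c :=
  tsum_nonneg fun _ => by positivity

theorem gaussTailTwo_nonneg (k : ℕ) (c : ℝ) : 0 ≤ gaussTailTwo k c :=
  tsum_nonneg fun _ => by positivity

theorem gaussTailOne_nonneg (k : ℕ) (c : ℝ) : 0 ≤ gaussTailOne k c :=
  tsum_nonneg fun _ => by positivity

theorem oddGaussTail_le {k : ℕ} {c a r : ℝ} (hc : 0 ≤ c) (ha : exp (-(8 * c)) ≤ a)
    (hr : exp (-(12 * c - 2 * k / 3)) ≤ r) (hr₁ : r < 1) :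
    oddGaussTail k c ≤ 3 ^ k * a / (1 - r) := by
  refine tsum_mul_exp_neg_le (fun n => by positivity) (fun n => ?_) (fun n => ?_) ha hr hr₁
  · calc (2 * (n : ℝ) + 3) ^ k ≤ 3 ^ k * exp (k * ((2 * n + 3) / 3 - 1)) :=
          pow_le_pow_mul_exp k (by norm_num) (by positivity)
      _ = 3 ^ k * exp (2 * k / 3 * n) := by ring_nf
  · nlinarith [mul_nonneg hc (sq_nonneg (n : ℝ))]

theorem gaussTailTwo_le {k : ℕ} {c a r : ℝ} (hc : 0 ≤ c) (ha : exp (-(3 * c)) ≤ a)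
    (hr : exp (-(4 * c - k / 2)) ≤ r) (hr₁ : r < 1) :
    gaussTailTwo k c ≤ 2 ^ k * a / (1 - r) := by
  refine tsum_mul_exp_neg_le (fun n => by positivity) (fun n => ?_) (fun n => ?_) ha hr hr₁
  · calc ((n : ℝ) + 2) ^ k ≤ 2 ^ k * exp (k * ((n + 2) / 2 - 1)) :=
          pow_le_pow_mul_exp k (by norm_num) (by positivity)
      _ = 2 ^ k * exp (k / 2 * n) := by ring_nf
  · nlinarith [mul_nonneg hc (sq_nonneg (n : ℝ))]

theorem gaussTailOne_le {k : ℕ} {c a r : ℝ} (hc : 0 ≤ c) (ha : exp (-c) ≤ a)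
    (hr : exp (-(3 * c - k)) ≤ r) (hr₁ : r < 1) :
    gaussTailOne k c ≤ a / (1 - r) := by
  have h := tsum_mul_exp_neg_le (C := 1) (p := fun n : ℕ => ((n : ℝ) + 1) ^ k)
    (E := fun n : ℕ => c * ((n : ℝ) + 1) ^ 2) (fun n => by positivity) (fun n => ?_)
    (fun n => ?_) ha hr hr₁
  · simpa only [gaussTailOne, one_mul] using h
  · calc ((n : ℝ) + 1) ^ k ≤ 1 ^ k * exp (k * ((n + 1) / 1 - 1)) :=
          pow_le_pow_mul_exp k one_pos (by positivity)
      _ = 1 * exp (k * n) := by ring_nf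
  · have hn : (n : ℝ) ≤ (n : ℝ) ^ 2 := by exact_mod_cast Nat.le_self_pow two_ne_zero n
    nlinarith [mul_le_mul_of_nonneg_left hn hc]

theorem oddGaussTail_le_of_two_le {k : ℕ} {c : ℝ} (hk : k ≤ 4) (hc : 2 ≤ c) :
    oddGaussTail k c ≤ 3 ^ k * 2e-6 := by
  have hk' : (k : ℝ) ≤ 4 := by exact_mod_cast hk
  exact (oddGaussTail_le (by linarith) (exp_neg_le_of_fourteen_le (by linarith))
    (exp_neg_le_of_one_le (by linarith)) (by norm_num)).trans (le_of_eq (by ring))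

theorem gaussTailTwo_le_of_five_le {k : ℕ} {c : ℝ} (hk : k ≤ 4) (hc : 5 ≤ c) :
    gaussTailTwo k c ≤ 2 ^ k * 2e-6 := by
  have hk' : (k : ℝ) ≤ 4 := by exact_mod_cast hk
  exact (gaussTailTwo_le (by linarith) (exp_neg_le_of_fourteen_le (by linarith))
    (exp_neg_le_of_one_le (by linarith)) (by norm_num)).trans (le_of_eq (by ring))

theorem gaussTailOne_le_of_two_pi_div_three_le {k : ℕ} {c : ℝ} (hk : k ≤ 4)
    (hc : 2 * π / 3 ≤ c) : gaussTailOne k c ≤ 0.2466 := by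
  have hk' : (k : ℝ) ≤ 4 := by exact_mod_cast hk
  exact (gaussTailOne_le (by linarith [pi_pos]) (exp_neg_le_of_two_pi_div_three_le hc)
    (exp_neg_le_of_one_le (by linarith [pi_gt_three])) (by norm_num)).trans (by norm_num)

theorem theta3_eq (X : ℝ) : theta3 X = 1 + 2 * gaussTailOne 0 (π * X) := by
  simp only [theta3, gaussTailOne, pow_zero, one_mul]
  congr 3; ext k; ring_nf

theorem one_le_theta3 (X : ℝ) : 1 ≤ theta3 X := by
  rw [theta3_eq]; linarith [gaussTailOne_nonneg 0 (π * X)]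

theorem theta3_le {X : ℝ} (hX : 1 / 3 ≤ X) : theta3 X ≤ 1.734 := by
  have hπX : π / 3 ≤ π * X := by nlinarith [pi_pos]
  have htail : gaussTailOne 0 (π * X) ≤ 0.3511 / (1 - 0.0433) :=
    gaussTailOne_le (by linarith [pi_pos]) (exp_neg_le_of_pi_div_three_le hπX)
      (exp_neg_le_of_pi_le (by push_cast; linarith)) (by norm_num)
  rw [theta3_eq]; linarith

theorem epsA1_le {α y : ℝ} (hT : 2 ≤ π * α * y) : epsA1 α y ≤ 2e-5 := by
  have h : epsA1 α y = oddGaussTail 2 (π * α * y) := by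
    simp only [epsA1, oddGaussTail, neg_mul]
  rw [h]; exact (oddGaussTail_le_of_two_le (by norm_num) hT).trans (by norm_num)

theorem epsA2_le {α y : ℝ} (hS : π / 3 ≤ π * α / y) : epsA2 α y ≤ 0.1289 := by
  have h : epsA2 α y = oddGaussTail 0 (π * α / (4 * y)) := by
    simp only [epsA2, oddGaussTail, neg_mul, pow_zero, one_mul]
  have hc : π * α / (4 * y) = π * α / y / 4 := by ring
  rw [h]
  refine (oddGaussTail_le (by linarith [pi_pos]) (exp_neg_le_of_two_pi_div_three_le ?_)
    (exp_neg_le_of_pi_le ?_) (by norm_num)).trans (by norm_num)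
  all_goals push_cast; linarith

theorem exp_neg_pi_mul_three_mul_sub_le {α y : ℝ} (hα : 1 ≤ α) (hy : √3 / 2 ≤ y) :
    exp (-(π * α * (3 * y - 1 / (4 * y)))) ≤ 0.00092 := by
  have hy₀ : 0.866 ≤ y := by nlinarith [sqrt_three_gt]
  have h4y : 1 / (4 * y) ≤ 0.29 := by rw [div_le_iff₀ (by linarith)]; linarith
  have hπ : 3.14 * (3 * 0.866 - 0.29) ≤ π * (3 * y - 1 / (4 * y)) :=
    mul_le_mul (by linarith [pi_gt_d2]) (by linarith) (by norm_num) pi_pos.le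
  have hα' := pi_mul_le_pi_mul_mul hα (t := 3 * y - 1 / (4 * y)) (by linarith)
  exact exp_neg_le_of_seven_le (by linarith)

theorem epsA4_le {α y : ℝ} (hα : 1 ≤ α) (hy : √3 / 2 ≤ y) (hr : 1 / 3 ≤ α / y)
    (hT : 2 ≤ π * α * y) : epsA4 α y ≤ 0.0032 := by
  have h : epsA4 α y = 2 * exp (-(π * α * (3 * y - 1 / (4 * y)))) *
      (1 + gaussTailTwo 2 (4 * π * α * y)) * theta3 (α / y) := by
    simp only [epsA4, gaussTailTwo, neg_mul]
  rw [h]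
  calc _ ≤ (2 : ℝ) * 0.00092 * (1 + 2 ^ 2 * 2e-6) * 1.734 := by
        gcongr
        · exact zero_le_one.trans (one_le_theta3 _)
        · linarith [gaussTailTwo_nonneg 2 (4 * π * α * y)]
        · exact exp_neg_pi_mul_three_mul_sub_le hα hy
        · exact gaussTailTwo_le_of_five_le (by norm_num) (by linarith)
        · exact theta3_le hr
    _ ≤ 0.0032 := by norm_num

theorem epsA_lt {α y : ℝ} (hα : 1 ≤ α) (hy : √3 / 2 ≤ y) (hr : 1 / 3 ≤ α / y)
    (hT : 2 ≤ π * α * y) (hS : π / 3 ≤ π * α / y) : epsA α y < 0.15 := by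
  have h₁ := epsA1_le hT
  have h₂ := epsA2_le hS
  have h₁₂ : epsA1 α y * epsA2 α y ≤ 2e-5 * 0.1289 :=
    mul_le_mul h₁ h₂ (tsum_nonneg fun _ => (exp_pos _).le) (by norm_num)
  rw [epsA]; linarith [epsA4_le hα hy hr hT]

theorem pow_four_mul_exp_neg_le {y x x₀ : ℝ} (hy : √3 / 2 ≤ y)
    (hx : x₀ + 4 * (2 * y / √3 - 1) ≤ x) : y ^ 4 * exp (-x) ≤ 9 / 16 * exp (-x₀) := by
  rw [← sqrt_three_div_two_pow_four]
  refine pow_mul_exp_neg_le 4 (by positivity) ((by positivity : (0 : ℝ) ≤ √3 / 2).trans hy) ?_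
  convert hx using 3 <;> push_cast <;> field_simp

theorem exp_neg_two_pi_mul_le {α y : ℝ} (hα : 1 ≤ α) (hy : √3 / 2 ≤ y) :
    exp (-(2 * π * α * y)) ≤ 0.0044 :=
  exp_neg_le_of_pi_mul_sqrt_three_le <| by
    nlinarith [mul_le_mul_of_nonneg_left (sqrt_three_div_two_le_mul hα hy) pi_pos.le]

theorem pow_four_mul_exp_neg_two_pi_mul_le {α y : ℝ} (hα : 1 ≤ α) (hy : √3 / 2 ≤ y) :
    y ^ 4 * exp (-(2 * π * α * y)) ≤ 9 / 16 * 0.0044 := by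
  have h3 : (0 : ℝ) < √3 := by positivity
  have hu : 1 ≤ 2 * y / √3 := by rw [le_div_iff₀ h3]; linarith
  have hπu : π * √3 * (2 * y / √3) = 2 * π * y := by field_simp
  have hπ3 : 4 ≤ π * √3 := by nlinarith [pi_gt_three, sqrt_three_gt]
  have hαy : 2 * π * y ≤ 2 * π * α * y := by
    have hy₀ : 0 ≤ 2 * π * y := by nlinarith [pi_pos]
    nlinarith
  refine (pow_four_mul_exp_neg_le hy (x₀ := π * √3) ?_).trans
    (by gcongr; exact exp_neg_le_of_pi_mul_sqrt_three_le le_rfl)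
  nlinarith [mul_nonneg (sub_nonneg.2 hπ3) (sub_nonneg.2 hu)]

theorem pow_four_mul_exp_neg_pi_mul_eight_mul_sub_le {α y : ℝ} (hα : 1 ≤ α)
    (hy : √3 / 2 ≤ y) : y ^ 4 * exp (-(π * α * (8 * y - 2 / y))) ≤ 9 / 16 * 1e-6 := by
  have hy₀ : 0.866 ≤ y := by linarith [sqrt_three_gt]
  have hu : 2 * y / √3 ≤ 1.155 * y := by
    rw [div_le_iff₀ (by linarith [sqrt_three_gt])]; nlinarith [sqrt_three_gt]
  have h2y : 2 / y ≤ 2.31 := by rw [div_le_iff₀ (by linarith)]; linarith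
  have hπ : 3.14 * (8 * y - 2.31) ≤ π * (8 * y - 2 / y) :=
    mul_le_mul (by linarith [pi_gt_d2]) (by linarith) (by linarith) pi_pos.le
  have hα' := pi_mul_le_pi_mul_mul hα (t := 8 * y - 2 / y) (by linarith)
  exact (pow_four_mul_exp_neg_le hy (x₀ := 14) (by linarith)).trans
    (by gcongr; exact exp_neg_le_of_fourteen_le le_rfl)

theorem epsB1_le {α y : ℝ} (hα : 1 ≤ α) (hy : √3 / 2 ≤ y) (hT : 2 ≤ π * α * y)
    (hS : π / 3 ≤ π * α / y) : epsB1 α y ≤ 0.00496 := by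
  have h : epsB1 α y = 2 * (y ^ 4 * exp (-(2 * π * α * y))) *
      (1 + oddGaussTail 0 (2 * π * α / y)) * (1 + oddGaussTail 4 (2 * π * α * y)) := by
    simp only [epsB1, oddGaussTail, neg_mul, pow_zero, one_mul]; ring
  have hS₂ : 2 * π * α / y = 2 * (π * α / y) := by ring
  rw [h]
  calc _ ≤ (2 : ℝ) * (9 / 16 * 0.0044) * (1 + 3 ^ 0 * 2e-6) * (1 + 3 ^ 4 * 2e-6) := by
        gcongr 2 * ?_ * (1 + ?_) * (1 + ?_)
        · linarith [oddGaussTail_nonneg 4 (2 * π * α * y)]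
        · linarith [oddGaussTail_nonneg 0 (2 * π * α / y)]
        · exact pow_four_mul_exp_neg_two_pi_mul_le hα hy
        · exact oddGaussTail_le_of_two_le (by norm_num) (by linarith [pi_gt_three])
        · exact oddGaussTail_le_of_two_le le_rfl (by linarith)
    _ ≤ 0.00496 := by norm_num

theorem epsB2_le {α y : ℝ} (hα : 1 ≤ α) (hy : √3 / 2 ≤ y) (hT : 2 ≤ π * α * y)
    (hS : π / 3 ≤ π * α / y) : epsB2 α y ≤ 0.000551 := by
  have h : epsB2 α y = 1 / 8 * exp (-(2 * π * α * y)) *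
      (1 + oddGaussTail 4 (2 * π * α / y)) * (1 + oddGaussTail 0 (2 * π * α * y)) := by
    simp only [epsB2, oddGaussTail, neg_mul, pow_zero, one_mul]
  have hS₂ : 2 * π * α / y = 2 * (π * α / y) := by ring
  rw [h]
  calc _ ≤ (1 : ℝ) / 8 * 0.0044 * (1 + 3 ^ 4 * 2e-6) * (1 + 3 ^ 0 * 2e-6) := by
        gcongr 1 / 8 * ?_ * (1 + ?_) * (1 + ?_)
        · linarith [oddGaussTail_nonneg 0 (2 * π * α * y)]
        · linarith [oddGaussTail_nonneg 4 (2 * π * α / y)]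
        · exact exp_neg_two_pi_mul_le hα hy
        · exact oddGaussTail_le_of_two_le le_rfl (by linarith [pi_gt_three])
        · exact oddGaussTail_le_of_two_le (by norm_num) (by linarith)
    _ ≤ 0.000551 := by norm_num

theorem epsB3_le {α y : ℝ} (hα : 1 ≤ α) (hy : √3 / 2 ≤ y) (hT : 2 ≤ π * α * y)
    (hS : π / 3 ≤ π * α / y) : epsB3 α y ≤ 2e-5 := by
  have h : epsB3 α y = 16 * (y ^ 4 * exp (-(π * α * (8 * y - 2 / y)))) *
      (1 + gaussTailTwo 4 (8 * π * α * y)) * (1 + 2 * gaussTailOne 0 (2 * π * α / y)) := by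
    simp only [epsB3, gaussTailTwo, gaussTailOne, neg_mul, pow_zero, one_mul]
    rw [mul_assoc 16]; congr 5; ext n; ring_nf
  have hS₂ : 2 * π * α / y = 2 * (π * α / y) := by ring
  rw [h]
  calc _ ≤ (16 : ℝ) * (9 / 16 * 1e-6) * (1 + 2 ^ 4 * 2e-6) * (1 + 2 * 0.2466) := by
        gcongr 16 * ?_ * (1 + ?_) * (1 + 2 * ?_)
        · linarith [gaussTailOne_nonneg 0 (2 * π * α / y)]
        · linarith [gaussTailTwo_nonneg 4 (8 * π * α * y)]
        · exact pow_four_mul_exp_neg_pi_mul_eight_mul_sub_le hα hy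
        · exact gaussTailTwo_le_of_five_le le_rfl (by linarith)
        · exact gaussTailOne_le_of_two_pi_div_three_le (by norm_num) (by linarith)
    _ ≤ 2e-5 := by norm_num

theorem epsB4_le {α y : ℝ} (hα : 1 ≤ α) (hy : √3 / 2 ≤ y) (hT : 2 ≤ π * α * y)
    (hS : π / 3 ≤ π * α / y) : epsB4 α y ≤ 2e-6 := by
  have h : epsB4 α y = y ^ 4 * exp (-(π * α * (8 * y - 2 / y))) *
      (1 + gaussTailTwo 0 (8 * π * α * y)) *
      (1 + 2 * (gaussTailOne 4 (2 * π * α / y) / y ^ 4)) := by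
    simp only [epsB4, gaussTailTwo, gaussTailOne, neg_mul, pow_zero, one_mul]
    rw [← tsum_div_const]; congr 4; ext n; ring_nf
  have hS₂ : 2 * π * α / y = 2 * (π * α / y) := by ring
  have hy₄ : 9 / 16 ≤ y ^ 4 := by
    rw [← sqrt_three_div_two_pow_four]; gcongr
  have hΘ : gaussTailOne 4 (2 * π * α / y) / y ^ 4 ≤ 0.2466 * (16 / 9) := by
    rw [div_le_iff₀ (by linarith)]
    nlinarith [gaussTailOne_le_of_two_pi_div_three_le (k := 4) le_rfl
      (show 2 * π / 3 ≤ 2 * π * α / y by linarith)]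
  rw [h]
  calc _ ≤ (9 : ℝ) / 16 * 1e-6 * (1 + 2 ^ 0 * 2e-6) * (1 + 2 * (0.2466 * (16 / 9))) := by
        gcongr ?_ * (1 + ?_) * (1 + 2 * ?_)
        · exact add_nonneg zero_le_one (mul_nonneg zero_le_two
            (div_nonneg (gaussTailOne_nonneg _ _) (by positivity)))
        · linarith [gaussTailTwo_nonneg 0 (8 * π * α * y)]
        · exact pow_four_mul_exp_neg_pi_mul_eight_mul_sub_le hα hy
        · exact gaussTailTwo_le_of_five_le (by norm_num) (by linarith)
    _ ≤ 2e-6 := by norm_num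

theorem epsB_lt {α y : ℝ} (hα : 1 ≤ α) (hy : √3 / 2 ≤ y) (hT : 2 ≤ π * α * y)
    (hS : π / 3 ≤ π * α / y) : epsB α y < 0.006 := by
  rw [epsB]
  linarith [epsB1_le hα hy hT hS, epsB2_le hα hy hT hS, epsB3_le hα hy hT hS,
    epsB4_le hα hy hT hS]

theorem epsA_epsB_small (α y : ℝ) (hα : 1 ≤ α) (hy : Real.sqrt 3 / 2 ≤ y)
    (hr : 1 / 3 ≤ α / y) :
    epsA α y < 0.15 ∧ epsB α y < 0.006 := by
  have hT : 2 ≤ π * α * y := by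
    nlinarith [pi_gt_three, sqrt_three_gt, sqrt_three_div_two_le_mul hα hy]
  have hS : π / 3 ≤ π * α / y := by
    rw [mul_div_assoc]; nlinarith [pi_pos]
  exact ⟨epsA_lt hα hy hr hT hS, epsB_lt hα hy hT hS⟩
end
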